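/- Let E be a locally cartesian closed category and P : E/I → E/J a functor that is polynomial (isomorphic to P_{f,g,h} for some polynomial (f,g,h) from I to J). Then for any object K ∈ E/I, the sliced functor P/K : E/K ≅ (E/I)/K → (E/J)/PK ≅ E/PK, sending an object X → K to PX → PK, is polynomial, i.e. belongs to Poly(K, PK). -/

import Mathlib

open CategoryTheory CategoryTheory.Limits

universe v u

variable {E : Type u} [Category.{v} E]

/-- A category with finite limits is locally cartesian closed if every pullback functor
`f* : E/J ⥤ E/I` has a right adjoint (pushforward). -/
def IsLCC (E : Type u) [Category.{v} E] [HasFiniteLimits E] : Prop :=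
  ∀ ⦃I J : E⦄ (f : I ⟶ J), (Over.pullback f).IsLeftAdjoint

/-- A functor `E/I ⥤ E/J` is polynomial if it is isomorphic to `f_! ∘ g_* ∘ h*` for some
polynomial `I ←h– A –g→ B –f→ J`. -/
def IsPolynomial [HasFiniteLimits E] {I J : E} (P : Over I ⥤ Over J) : Prop :=
  ∃ (A B : E) (h : A ⟶ I) (g : A ⟶ B) (f : B ⟶ J) (gStar : Over A ⥤ Over B),
    Nonempty (Over.pullback g ⊣ gStar) ∧
      Nonempty (P ≅ Over.pullback h ⋙ gStar ⋙ Over.map f)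

/-- The sliced functor `P/K : E/K ⥤ E/PK` of `P : E/I ⥤ E/J` at `K ∈ E/I`, sending
`X → K` to `PX → PK`, obtained via the iterated slice equivalences
`E/K ≅ (E/I)/K` and `(E/J)/PK ≅ E/PK`. -/
def sliceFunctor {I J : E} (P : Over I ⥤ Over J) (K : Over I) :
    Over K.left ⥤ Over (P.obj K).left :=
  (Over.iteratedSliceEquiv K).inverse ⋙ Over.post P ⋙
    (Over.iteratedSliceEquiv (P.obj K)).functor

/-!
Slicing commutes with composition, and with natural isomorphisms up to reindexing along a
component of the isomorphism. If `F ⊣ U`, the slice of `U` at `Q` is right adjoint to the slice of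
`F` at `U Q` followed by `Σ` along the counit at `Q`. Since slicing `Σ_f` gives the identity, this
identifies the slice of `h*` at `K` with pullback along the projection `π : h*K → K`, and the slice
of `g_*` at `Q = h*K` with `g'_* ∘ ε*`, where `ε : g*g_*Q → Q` is the counit and `g'` is the base
change of `g` along `g_*Q → B`. Hence `P/K ≅ Σ_w ∘ g'_* ∘ (ε ≫ π)*`, where `w` is the component at
`K` of the isomorphism `P ≅ P_{f,g,h}`.
-/

section

variable {I J L : E}

def sliceFunctorCompIso (F : Over I ⥤ Over J) (G : Over J ⥤ Over L) (K : Over I) :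
    sliceFunctor (F ⋙ G) K ≅ sliceFunctor F K ⋙ sliceFunctor G (F.obj K) :=
  Functor.isoWhiskerLeft ((Over.iteratedSliceEquiv K).inverse ⋙ Over.post F)
    (Functor.isoWhiskerRight (Over.iteratedSliceEquiv (F.obj K)).unitIso
      (Over.post G ⋙ (Over.iteratedSliceEquiv (G.obj (F.obj K))).functor))

def sliceFunctorIsoOfIso {F G : Over I ⥤ Over J} (e : F ≅ G) (K : Over I) :
    sliceFunctor F K ≅ sliceFunctor G K ⋙ Over.map (e.inv.app K).left :=
  Functor.isoWhiskerLeft (Over.iteratedSliceEquiv K).inverse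
    (Functor.isoWhiskerRight (Over.postCongr e.symm).symm _ ≪≫ Functor.associator _ _ _ ≪≫
      Functor.isoWhiskerLeft (Over.post G) (Over.iteratedSliceForwardNaturalityIso _).symm)

def sliceFunctorMapIso (f : I ⟶ J) (K : Over I) :
    sliceFunctor (Over.map f) K ≅ 𝟭 (Over K.left) :=
  Iso.refl _

noncomputable def sliceFunctorAdjunction {F : Over I ⥤ Over J} {U : Over J ⥤ Over I}
    (adj : F ⊣ U) (Q : Over J) :
    sliceFunctor F (U.obj Q) ⋙ Over.map (adj.counit.app Q).left ⊣ sliceFunctor U Q :=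
  (((Over.iteratedSliceEquiv (U.obj Q)).symm.toAdjunction.comp
    (Over.postAdjunctionRight adj)).comp (Over.iteratedSliceEquiv Q).toAdjunction).ofNatIsoLeft
    (Functor.isoWhiskerLeft ((Over.iteratedSliceEquiv (U.obj Q)).inverse ⋙ Over.post F)
      (Over.iteratedSliceForwardNaturalityIso _))

variable [HasPullbacks E]

noncomputable def sliceFunctorPullbackIso (h : I ⟶ J) (K : Over J) :
    sliceFunctor (Over.pullback h) K ≅ Over.pullback (pullback.fst K.hom h) :=
  ((sliceFunctorAdjunction (Over.mapPullbackAdj h) K).ofNatIsoLeft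
    (Functor.isoWhiskerRight (sliceFunctorMapIso h _) _ ≪≫ Functor.leftUnitor _ ≪≫
      Over.mapCongr _ _ (by simp))).rightAdjointUniq (Over.mapPullbackAdj _)

noncomputable def sliceFunctorPushforwardIso {g : I ⟶ J} {gStar : Over I ⥤ Over J}
    (adj : Over.pullback g ⊣ gStar) (Q : Over I) {gStar' : Over _ ⥤ Over _}
    (adj' : Over.pullback (pullback.fst (gStar.obj Q).hom g) ⊣ gStar') :
    sliceFunctor gStar Q ≅ Over.pullback (adj.counit.app Q).left ⋙ gStar' :=
  ((sliceFunctorAdjunction adj Q).ofNatIsoLeft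
    (Functor.isoWhiskerRight (sliceFunctorPullbackIso g _) _)).rightAdjointUniq
    (adj'.comp (Over.mapPullbackAdj _))

end

/-- in a locally cartesian closed category, if `P : E/I ⥤ E/J` is polynomial,
then for every `K ∈ E/I` the sliced functor `P/K : E/K ⥤ E/PK` is polynomial. -/
theorem polynomial_slice [HasFiniteLimits E] (hlcc : IsLCC E) {I J : E}
    (P : Over I ⥤ Over J) (hP : IsPolynomial P) (K : Over I) :
    IsPolynomial (sliceFunctor P K) := by
  obtain ⟨A, B, h, g, f, gStar, ⟨adj⟩, ⟨e⟩⟩ := hP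
  let Q := (Over.pullback h).obj K
  let π := pullback.fst K.hom h
  let ε := (adj.counit.app Q).left
  let g' := pullback.fst (gStar.obj Q).hom g
  let w := (e.inv.app K).left
  obtain ⟨gStar', ⟨adj'⟩⟩ := (hlcc g').exists_rightAdjoint
  refine ⟨_, _, ε ≫ π, g', w, gStar', ⟨adj'⟩, ⟨?_⟩⟩
  calc sliceFunctor P K
      ≅ sliceFunctor (Over.pullback h ⋙ gStar ⋙ Over.map f) K ⋙ Over.map w :=
      sliceFunctorIsoOfIso e K
    _ ≅ (sliceFunctor (Over.pullback h) K ⋙ sliceFunctor gStar Q ⋙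
          sliceFunctor (Over.map f) (gStar.obj Q)) ⋙ Over.map w :=
      Functor.isoWhiskerRight
        (sliceFunctorCompIso _ _ K ≪≫ Functor.isoWhiskerLeft _ (sliceFunctorCompIso _ _ Q)) _
    _ ≅ (Over.pullback π ⋙ (Over.pullback ε ⋙ gStar') ⋙ 𝟭 _) ⋙ Over.map w :=
      Functor.isoWhiskerRight
        (NatIso.hcomp (sliceFunctorPullbackIso h K)
          (NatIso.hcomp (sliceFunctorPushforwardIso adj Q adj') (sliceFunctorMapIso f _))) _
    _ ≅ (Over.pullback (ε ≫ π) ⋙ gStar') ⋙ Over.map w :=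
      Functor.isoWhiskerRight
        ((Functor.associator _ _ _).symm ≪≫ Functor.rightUnitor _ ≪≫
          Functor.isoWhiskerRight (Over.pullbackComp ε π).symm gStar') _
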